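/- Let Φ(τ) = τ/log(e+τ) and θ(x,τ) = τ/(log(e+|x|)+log(e+τ)). Then L_*^Φ(ℝⁿ) ⊂ L^θ(ℝⁿ) and there exists a positive constant C such that ‖f‖_{L^θ} ≤ C ‖f‖_{L_*^Φ} for every f ∈ L_*^Φ(ℝⁿ). -/

import Mathlib

open MeasureTheory ENNReal

/-- Luxemburg norm for the Orlicz function Φ, valued in ℝ≥0∞. -/
noncomputable def luxNormE {n : ℕ} (Φ : ℝ → ℝ)
    (f : EuclideanSpace ℝ (Fin n) → ℝ) : ℝ≥0∞ :=
  sInf ((fun l : NNReal => (l : ℝ≥0∞)) ''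
    {l : NNReal | 0 < l ∧ ∫⁻ x, ENNReal.ofReal (Φ (|f x| / (l : ℝ))) ≤ 1})

/-- The unit cube `Q_k = k + [0,1)ⁿ` for `k ∈ ℤⁿ`. -/
def unitCube {n : ℕ} (k : Fin n → ℤ) : Set (EuclideanSpace ℝ (Fin n)) :=
  {x | ∀ i, (k i : ℝ) ≤ x i ∧ x i < (k i : ℝ) + 1}

/-- The variant Orlicz norm `‖f‖_{L_*^Φ} = Σ_{k∈ℤⁿ} ‖f·1_{Q_k}‖_{L^Φ}`. -/
noncomputable def starNormE {n : ℕ} (Φ : ℝ → ℝ)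
    (f : EuclideanSpace ℝ (Fin n) → ℝ) : ℝ≥0∞ :=
  ∑' k : Fin n → ℤ, luxNormE Φ (Set.indicator (unitCube k) f)

/-- The Musielak–Orlicz norm for θ(x,τ) = τ/(log(e+|x|)+log(e+τ)), valued in ℝ≥0∞. -/
noncomputable def thetaNormE {n : ℕ} (f : EuclideanSpace ℝ (Fin n) → ℝ) : ℝ≥0∞ :=
  sInf ((fun l : NNReal => (l : ℝ≥0∞)) ''
    {l : NNReal | 0 < l ∧ ∫⁻ x, ENNReal.ofReal ((|f x| / (l : ℝ)) /
      (Real.log (Real.exp 1 + ‖x‖) + Real.log (Real.exp 1 + |f x| / (l : ℝ)))) ≤ 1})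

/-! Split `f` over the unit cubes `Q_k` and, for `ε ≥ ‖f‖_{L_*^Φ}`, give each cube its own
Luxemburg scale `b_k = ‖f 1_{Q_k}‖_Φ + ε μ_k`: the summable weights `μ_k = ∏ᵢ (1 + |kᵢ|)⁻²` make
every `b_k` admissible while keeping `∑ b_k ≤ ‖f‖_{L_*^Φ} + ε ∑ μ_k`. At a global scale `λ`
comparable to `∑ b_k`, the inequality `log (e + s) ≤ log (e + a s) + log (e + 1/a)` gives on `Q_k`
`θ(x, |f|/λ) ≤ (b_k/λ) (1 + log (e + λ/b_k) / log (e + |x|)) Φ(|f|/b_k)`.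
Since `λ/b_k ≲ 1/μ_k ≤ (2 + |x|)^{2n}` on `Q_k`, the bracket is bounded uniformly, and summing
over the cubes bounds the θ-modular of `f/λ` by `1`. -/

theorem ENNReal.tsum_fin_pi_prod {α : Type*} (g : α → ℝ≥0∞) :
    ∀ n : ℕ, ∑' k : Fin n → α, ∏ i, g (k i) = (∑' a, g a) ^ n
  | 0 => by simp
  | n + 1 => by
    rw [← (Fin.consEquiv fun _ => α).tsum_eq, ENNReal.tsum_prod']
    simp [Fin.prod_univ_succ, ENNReal.tsum_mul_left, ENNReal.tsum_mul_right,
      ENNReal.tsum_fin_pi_prod g n, pow_succ']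

theorem ENNReal.le_ofReal_mul_of_forall_le {a b : ℝ≥0∞} {c : ℝ} (hc : 0 < c)
    (h : ∀ ε : ℝ, 0 < ε → b ≤ ENNReal.ofReal ε → a ≤ ENNReal.ofReal (c * ε)) :
    a ≤ ENNReal.ofReal c * b := by
  rcases eq_or_ne b ⊤ with rfl | hb
  · simp [hc]
  refine ENNReal.le_of_forall_pos_le_add fun η hη _ => ?_
  have hε : 0 < b.toReal + η / c := by positivity
  have hbε : b ≤ ENNReal.ofReal (b.toReal + η / c) := by
    rw [← ENNReal.ofReal_toReal hb]
    exact ENNReal.ofReal_le_ofReal (by simp; positivity)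
  calc a ≤ ENNReal.ofReal (c * (b.toReal + η / c)) := h _ hε hbε
    _ = ENNReal.ofReal c * b + η := by
        rw [mul_add, mul_div_cancel₀ _ hc.ne', ENNReal.ofReal_add (by positivity) η.coe_nonneg,
          ENNReal.ofReal_mul hc.le, ENNReal.ofReal_toReal hb, ENNReal.ofReal_coe_nnreal]

lemma exists_ofReal_gt_of_tsum_le {ι : Type*} {L : ι → ℝ≥0∞} {w : ι → ℝ} (hw : ∀ i, 0 < w i)
    {ε : ℝ} (hε : 0 < ε) (hL : ∑' i, L i ≤ ENNReal.ofReal ε) :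
    ∃ b : ι → ℝ, (∀ i, L i < ENNReal.ofReal (b i)) ∧ (∀ i, ε * w i ≤ b i) ∧
      ∑' i, ENNReal.ofReal (b i) ≤ ENNReal.ofReal ε * (1 + ∑' i, ENNReal.ofReal (w i)) := by
  have hLtop i : L i ≠ ⊤ :=
    ne_top_of_le_ne_top ENNReal.ofReal_ne_top ((ENNReal.le_tsum i).trans hL)
  have hεw i : 0 < ε * w i := mul_pos hε (hw i)
  refine ⟨fun i => (L i).toReal + ε * w i, fun i => ?_, fun i => ?_, ?_⟩
  · rw [← ENNReal.ofReal_toReal (hLtop i), ENNReal.ofReal_lt_ofReal_iff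
      (add_pos_of_nonneg_of_pos ENNReal.toReal_nonneg (hεw i))]
    linarith [hεw i]
  · linarith [ENNReal.toReal_nonneg (a := L i)]
  · simp_rw [ENNReal.ofReal_add ENNReal.toReal_nonneg (hεw _).le,
      ENNReal.ofReal_toReal (hLtop _), ENNReal.ofReal_mul hε.le]
    rw [ENNReal.tsum_add, ENNReal.tsum_mul_left, mul_add, mul_one]
    gcongr

open Real

section LogExpOneAdd

variable {u v : ℝ}

lemma two_le_exp_one : 2 ≤ exp 1 := exp_one_gt_two.le

lemma one_le_log_exp_one_add (hu : 0 ≤ u) : 1 ≤ log (exp 1 + u) :=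
  calc (1 : ℝ) = log (exp 1) := (log_exp 1).symm
    _ ≤ log (exp 1 + u) := log_le_log (exp_pos 1) (by linarith)

lemma log_exp_one_add_pos (hu : 0 ≤ u) : 0 < log (exp 1 + u) :=
  one_pos.trans_le (one_le_log_exp_one_add hu)

lemma log_exp_one_add_mul_le (hu : 0 ≤ u) (hv : 0 ≤ v) :
    log (exp 1 + u * v) ≤ log (exp 1 + u) + log (exp 1 + v) := by
  have he := two_le_exp_one
  rw [← log_mul (by positivity) (by positivity)]
  exact log_le_log (by positivity) (by nlinarith)

lemma log_exp_one_add_le_two_add_log (hv : 1 ≤ v) : log (exp 1 + v) ≤ 2 + log v := by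
  have he := two_le_exp_one
  have he2 : exp 1 + 1 ≤ exp 2 := by
    rw [show (2 : ℝ) = 1 + 1 by norm_num, exp_add]; nlinarith
  calc log (exp 1 + v) ≤ log (exp 2 * v) := log_le_log (by positivity) (by nlinarith)
    _ = 2 + log v := by rw [log_mul (exp_pos 2).ne' (by positivity), log_exp]

lemma log_exp_one_add_le_one_add_half (hu : 0 ≤ u) : log (exp 1 + u) ≤ 1 + u / 2 := by
  have he := two_le_exp_one
  rw [log_le_iff_le_exp (by positivity), exp_add]
  nlinarith [add_one_le_exp (u / 2)]

end LogExpOneAdd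

lemma exists_add_log_exp_one_add_mul_le (c : ℝ) {D : ℝ} (hD : 0 ≤ D) :
    ∃ A : ℝ, 0 < A ∧ c + log (exp 1 + A * D) ≤ A := by
  have hlog := one_le_log_exp_one_add hD
  set A := 2 * (|c| + log (exp 1 + D) + 1)
  have hA : 0 < A := by positivity
  refine ⟨A, hA, ?_⟩
  linarith [log_exp_one_add_mul_le hA.le hD, log_exp_one_add_le_one_add_half hA.le, le_abs_self c]

noncomputable def phi (τ : ℝ) : ℝ := τ / log (exp 1 + τ)

lemma phi_nonneg {τ : ℝ} (hτ : 0 ≤ τ) : 0 ≤ phi τ :=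
  div_nonneg hτ (log_exp_one_add_pos hτ).le

lemma monotoneOn_phi : MonotoneOn phi (Set.Ici 0) := by
  intro u (hu : 0 ≤ u) v (hv : 0 ≤ v) huv
  have heu : 0 < exp 1 + u := by positivity
  have hlu := one_le_log_exp_one_add hu
  -- `log (1 + y) ≤ y` applied to `y = (v - u) / (e + u)`
  have hslope : log (exp 1 + v) ≤ log (exp 1 + u) + (v - u) / (exp 1 + u) := by
    have := log_le_sub_one_of_pos (div_pos (by positivity : 0 < exp 1 + v) heu)
    rw [log_div (by positivity) heu.ne', div_sub_one heu.ne',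
      show exp 1 + v - (exp 1 + u) = v - u by ring] at this
    linarith
  have hfrac : u * ((v - u) / (exp 1 + u)) ≤ v - u := by
    rw [mul_div_assoc', div_le_iff₀ heu]
    nlinarith [exp_pos 1]
  have hlv := one_le_log_exp_one_add hv
  rw [phi, phi, div_le_div_iff₀ (by linarith) (by linarith)]
  nlinarith [mul_le_mul_of_nonneg_left hslope hu]

lemma mul_div_add_log_le_mul_phi {L a s : ℝ} (hL : 0 < L) (ha : 0 < a) (hs : 0 ≤ s) :
    a * s / (L + log (exp 1 + a * s)) ≤ a * (1 + log (exp 1 + a⁻¹) / L) * phi s := by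
  have has : 0 ≤ a * s := by positivity
  have hla := one_le_log_exp_one_add has
  have hli := one_le_log_exp_one_add (inv_nonneg.2 ha.le)
  have hls : log (exp 1 + s) ≤ log (exp 1 + a * s) + log (exp 1 + a⁻¹) := by
    have h := log_exp_one_add_mul_le has (inv_nonneg.2 ha.le)
    rwa [mul_right_comm, mul_inv_cancel₀ ha.ne', one_mul] at h
  have hls0 := log_exp_one_add_pos hs
  rw [phi, show a * (1 + log (exp 1 + a⁻¹) / L) * (s / log (exp 1 + s)) =
      a * s * (L + log (exp 1 + a⁻¹)) / (L * log (exp 1 + s)) by field_simp,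
    div_le_div_iff₀ (by positivity) (by positivity)]
  have key : L * log (exp 1 + s) ≤ (L + log (exp 1 + a⁻¹)) * (L + log (exp 1 + a * s)) := by
    nlinarith
  linarith [mul_le_mul_of_nonneg_left key has]

noncomputable def theta {E : Type*} [Norm E] (x : E) (τ : ℝ) : ℝ :=
  τ / (log (exp 1 + ‖x‖) + log (exp 1 + τ))

lemma theta_div_le {E : Type*} [SeminormedAddGroup E] (x : E) {t b r : ℝ} (ht : 0 ≤ t)
    (hb : 0 < b) (hr : 0 < r) :
    theta x (t / r) ≤ b / r * (1 + log (exp 1 + r / b) / log (exp 1 + ‖x‖)) * phi (t / b) := by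
  have h := mul_div_add_log_le_mul_phi (log_exp_one_add_pos (norm_nonneg x)) (div_pos hb hr)
    (div_nonneg ht hb.le)
  rwa [inv_div, show b / r * (t / b) = t / r by field_simp] at h

lemma lintegral_le_one_of_luxNormE_lt {n : ℕ} {Φ : ℝ → ℝ} (hΦ : MonotoneOn Φ (Set.Ici 0))
    {g : EuclideanSpace ℝ (Fin n) → ℝ} {r : ℝ} (h : luxNormE Φ g < ENNReal.ofReal r) :
    ∫⁻ x, ENNReal.ofReal (Φ (|g x| / r)) ≤ 1 := by
  obtain ⟨_, ⟨l, ⟨hl, hint⟩, rfl⟩, hlr⟩ := sInf_lt_iff.1 h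
  have hlr : (l : ℝ) < r := by simpa using hlr
  have hl : (0 : ℝ) < l := hl
  refine le_trans (lintegral_mono fun x => ENNReal.ofReal_le_ofReal ?_) hint
  exact hΦ (div_nonneg (abs_nonneg _) (hl.trans hlr).le) (div_nonneg (abs_nonneg _) hl.le)
    (div_le_div_of_nonneg_left (abs_nonneg _) hl hlr.le)

lemma thetaNormE_le_ofReal {n : ℕ} {f : EuclideanSpace ℝ (Fin n) → ℝ} {r : ℝ} (hr : 0 < r)
    (h : ∫⁻ x, ENNReal.ofReal (theta x (|f x| / r)) ≤ 1) : thetaNormE f ≤ ENNReal.ofReal r :=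
  sInf_le ⟨r.toNNReal, ⟨Real.toNNReal_pos.2 hr, by rwa [Real.coe_toNNReal _ hr.le]⟩, rfl⟩

lemma measurableSet_unitCube {n : ℕ} (k : Fin n → ℤ) : MeasurableSet (unitCube k) := by
  simp only [unitCube, Set.ofPred_forall]
  measurability

lemma iUnion_unitCube (n : ℕ) : ⋃ k : Fin n → ℤ, unitCube k = Set.univ :=
  Set.eq_univ_of_forall fun x =>
    Set.mem_iUnion.2 ⟨fun i => ⌊x i⌋, fun _ => ⟨Int.floor_le _, Int.lt_floor_add_one _⟩⟩

lemma abs_le_norm_add_one_of_mem_unitCube {n : ℕ} {k : Fin n → ℤ}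
    {x : EuclideanSpace ℝ (Fin n)} (hx : x ∈ unitCube k) (i : Fin n) :
    |(k i : ℝ)| ≤ ‖x‖ + 1 := by
  have hxi : |x i| ≤ ‖x‖ := by simpa using PiLp.norm_apply_le x i
  obtain ⟨hk, hk'⟩ := hx i
  exact abs_le.2 ⟨by linarith [neg_abs_le (x i)], by linarith [le_abs_self (x i)]⟩

section CubeWeight

variable {n : ℕ}

noncomputable def cubeWeight (k : Fin n → ℤ) : ℝ := ∏ i, ((1 + |(k i : ℝ)|) ^ 2)⁻¹

lemma cubeWeight_pos (k : Fin n → ℤ) : 0 < cubeWeight k :=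
  Finset.prod_pos fun _ _ => by positivity

lemma inv_cubeWeight (k : Fin n → ℤ) : (cubeWeight k)⁻¹ = ∏ i, (1 + |(k i : ℝ)|) ^ 2 := by
  simp [cubeWeight, Finset.prod_inv_distrib]

lemma one_le_inv_cubeWeight (k : Fin n → ℤ) : 1 ≤ (cubeWeight k)⁻¹ := by
  rw [inv_cubeWeight]
  exact Finset.one_le_prod fun _ _ => one_le_pow₀ (by simp)

lemma log_inv_cubeWeight_le {k : Fin n → ℤ} {x : EuclideanSpace ℝ (Fin n)}
    (hx : x ∈ unitCube k) : log (cubeWeight k)⁻¹ ≤ 2 * n * log (exp 1 + ‖x‖) := by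
  have he := two_le_exp_one
  rw [inv_cubeWeight, log_prod fun i _ => by positivity]
  calc ∑ i, Real.log ((1 + |(k i : ℝ)|) ^ 2) ≤ ∑ _i : Fin n, 2 * log (exp 1 + ‖x‖) := by
        refine Finset.sum_le_sum fun i _ => ?_
        rw [Real.log_pow, Nat.cast_ofNat]
        have := abs_le_norm_add_one_of_mem_unitCube hx i
        gcongr 2 * ?_
        exact log_le_log (by positivity) (by linarith)
    _ = 2 * n * log (exp 1 + ‖x‖) := by
        rw [Finset.sum_const, Finset.card_univ, Fintype.card_fin, nsmul_eq_mul]; ring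

lemma summable_inv_one_add_abs_sq : Summable fun m : ℤ => ((1 + |(m : ℝ)|) ^ 2)⁻¹ := by
  have h : Summable fun m : ℕ => ((1 + (m : ℝ)) ^ 2)⁻¹ := by
    simpa [add_comm] using (summable_nat_add_iff 1).2 (Real.summable_nat_pow_inv.2 one_lt_two)
  exact .of_nat_of_neg (by simpa using h) (by simpa using h)

variable (n) in
noncomputable def cubeWeightSum : ℝ := (∑' k : Fin n → ℤ, ENNReal.ofReal (cubeWeight k)).toReal

variable (n) in
lemma cubeWeightSum_nonneg : 0 ≤ cubeWeightSum n := ENNReal.toReal_nonneg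

lemma ofReal_cubeWeightSum :
    ENNReal.ofReal (cubeWeightSum n) = ∑' k : Fin n → ℤ, ENNReal.ofReal (cubeWeight k) := by
  refine ENNReal.ofReal_toReal ?_
  simp_rw [cubeWeight, ENNReal.ofReal_prod_of_nonneg fun i _ => inv_nonneg.2 (sq_nonneg _)]
  rw [ENNReal.tsum_fin_pi_prod (fun m : ℤ => ENNReal.ofReal ((1 + |(m : ℝ)|) ^ 2)⁻¹),
    ← ENNReal.ofReal_tsum_of_nonneg (fun _ => by positivity) summable_inv_one_add_abs_sq]
  exact ENNReal.pow_ne_top ENNReal.ofReal_ne_top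

lemma one_add_log_div_le_of_mem_unitCube {k : Fin n → ℤ} {x : EuclideanSpace ℝ (Fin n)}
    (hx : x ∈ unitCube k) {K r : ℝ} (hK : 0 ≤ K) (hr : 0 ≤ r)
    (hrK : r ≤ K * (cubeWeight k)⁻¹) :
    1 + log (exp 1 + r) / log (exp 1 + ‖x‖) ≤ 3 + 2 * n + log (exp 1 + K) := by
  have hLx := one_le_log_exp_one_add (norm_nonneg x)
  have hK1 := one_le_log_exp_one_add hK
  have hlog : log (exp 1 + r) ≤ log (exp 1 + K) + 2 + 2 * n * log (exp 1 + ‖x‖) :=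
    calc log (exp 1 + r) ≤ log (exp 1 + K * (cubeWeight k)⁻¹) :=
          log_le_log (by positivity) (by linarith)
      _ ≤ log (exp 1 + K) + log (exp 1 + (cubeWeight k)⁻¹) :=
        log_exp_one_add_mul_le hK (inv_nonneg.2 (cubeWeight_pos k).le)
      _ ≤ log (exp 1 + K) + (2 + log (cubeWeight k)⁻¹) := by
        gcongr; exact log_exp_one_add_le_two_add_log (one_le_inv_cubeWeight k)
      _ ≤ log (exp 1 + K) + 2 + 2 * n * log (exp 1 + ‖x‖) := by
        linarith [log_inv_cubeWeight_le hx]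
  have : log (exp 1 + r) / log (exp 1 + ‖x‖) ≤ 2 + 2 * n + log (exp 1 + K) := by
    rw [div_le_iff₀ (by linarith)]
    nlinarith
  linarith

end CubeWeight

lemma setLIntegral_theta_le {n : ℕ} {f : EuclideanSpace ℝ (Fin n) → ℝ} {k : Fin n → ℤ}
    {b r P : ℝ} (hb : 0 < b) (hr : 0 < r)
    (hlux : luxNormE phi ((unitCube k).indicator f) < ENNReal.ofReal b)
    (hP : ∀ x ∈ unitCube k, 1 + log (exp 1 + r / b) / log (exp 1 + ‖x‖) ≤ P) :
    ∫⁻ x in unitCube k, ENNReal.ofReal (theta x (|f x| / r)) ≤ ENNReal.ofReal (b / r * P) := by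
  calc ∫⁻ x in unitCube k, ENNReal.ofReal (theta x (|f x| / r))
      ≤ ∫⁻ x in unitCube k, ENNReal.ofReal (b / r * P) *
          ENNReal.ofReal (phi (|(unitCube k).indicator f x| / b)) := by
        refine setLIntegral_mono' (measurableSet_unitCube k) fun x hx => ?_
        have hphi := phi_nonneg (div_nonneg (abs_nonneg (f x)) hb.le)
        rw [Set.indicator_of_mem hx, ← ENNReal.ofReal_mul' hphi]
        refine ENNReal.ofReal_le_ofReal ((theta_div_le x (abs_nonneg _) hb hr).trans ?_)
        gcongr
        exact hP x hx
    _ ≤ ENNReal.ofReal (b / r * P) *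
          ∫⁻ x, ENNReal.ofReal (phi (|(unitCube k).indicator f x| / b)) := by
        rw [lintegral_const_mul' _ _ ENNReal.ofReal_ne_top]
        gcongr
        exact Measure.restrict_le_self
    _ ≤ ENNReal.ofReal (b / r * P) :=
        mul_le_of_le_one_right' (lintegral_le_one_of_luxNormE_lt monotoneOn_phi hlux)

theorem thetaNormE_le_of_starNormE_le {n : ℕ} {A ε : ℝ} (hA : 0 < A) (hε : 0 < ε)
    (hAP : 3 + 2 * n + Real.log (exp 1 + A * (1 + cubeWeightSum n)) ≤ A)
    {f : EuclideanSpace ℝ (Fin n) → ℝ} (hf : starNormE phi f ≤ ENNReal.ofReal ε) :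
    thetaNormE f ≤ ENNReal.ofReal (A * (1 + cubeWeightSum n) * ε) := by
  set M := cubeWeightSum n
  have hM : 0 ≤ M := cubeWeightSum_nonneg n
  set r := A * (1 + M) * ε with hr_def
  have hr : 0 < r := by positivity
  obtain ⟨b, hLb, hwb, hsum⟩ := exists_ofReal_gt_of_tsum_le cubeWeight_pos hε hf
  rw [← ofReal_cubeWeightSum, ← ENNReal.ofReal_one, ← ENNReal.ofReal_add zero_le_one hM,
    ← ENNReal.ofReal_mul hε.le] at hsum
  have hb k : 0 < b k := (mul_pos hε (cubeWeight_pos k)).trans_le (hwb k)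
  have hratio k : r / b k ≤ A * (1 + M) * (cubeWeight k)⁻¹ := by
    rw [div_le_iff₀ (hb k)]
    calc r = A * (1 + M) * (cubeWeight k)⁻¹ * (ε * cubeWeight k) := by
          field_simp [(cubeWeight_pos k).ne']; ring
      _ ≤ _ := by
          have := cubeWeight_pos k
          exact mul_le_mul_of_nonneg_left (hwb k) (by positivity)
  refine thetaNormE_le_ofReal hr ?_
  calc ∫⁻ x, ENNReal.ofReal (theta x (|f x| / r))
      ≤ ∑' k, ∫⁻ x in unitCube k, ENNReal.ofReal (theta x (|f x| / r)) := by
        rw [← setLIntegral_univ, ← iUnion_unitCube]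
        exact lintegral_iUnion_le _ _
    _ ≤ ∑' k, ENNReal.ofReal (b k / r * A) := ENNReal.tsum_le_tsum fun k =>
        setLIntegral_theta_le (hb k) hr (hLb k) fun x hx =>
          (one_add_log_div_le_of_mem_unitCube hx (by positivity) (div_pos hr (hb k)).le
            (hratio k)).trans hAP
    _ = (∑' k, ENNReal.ofReal (b k)) / ENNReal.ofReal (ε * (1 + M)) := by
        simp_rw [div_eq_mul_inv, ← ENNReal.tsum_mul_right]
        refine tsum_congr fun k => ?_
        rw [← ENNReal.ofReal_inv_of_pos (by positivity), ← ENNReal.ofReal_mul (hb k).le, hr_def]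
        congr 1
        field_simp
    _ ≤ 1 := ENNReal.div_le_of_le_mul (by rwa [one_mul])

/-- L_*^Φ(ℝⁿ) ⊂ L^θ(ℝⁿ) with ‖f‖_{L^θ} ≤ C ‖f‖_{L_*^Φ}, where
Φ(τ) = τ/log(e+τ) and θ(x,τ) = τ/(log(e+|x|)+log(e+τ)). -/
theorem thetaNorm_le_starNorm (n : ℕ) :
    ∃ C : NNReal, 0 < C ∧
      ∀ f : EuclideanSpace ℝ (Fin n) → ℝ, Measurable f →
        thetaNormE f ≤ (C : ℝ≥0∞) *
          starNormE (fun τ => τ / Real.log (Real.exp 1 + τ)) f := by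
  have hM : 0 < 1 + cubeWeightSum n := by linarith [cubeWeightSum_nonneg n]
  obtain ⟨A, hA, hAP⟩ := exists_add_log_exp_one_add_mul_le (3 + 2 * n) hM.le
  refine ⟨(A * (1 + cubeWeightSum n)).toNNReal, by positivity, fun f _ => ?_⟩
  exact ENNReal.le_ofReal_mul_of_forall_le (by positivity) fun ε hε hf =>
    thetaNormE_le_of_starNormE_le hA hε hAP hf
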